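/- Let u, v : ℝ⁴ → ℝ be smooth functions with u₂, u₃, u₄, v₁, v₃, v₄ nowhere vanishing, and let λ₁,λ₂,λ₃,λ₄ be pairwise distinct reals. Define the λ-dependent vector fields X₀(λ) = (λ-λ₁)·((λ₂-λ₄)/(λ₁-λ₂))·(v₄/v₁)·∂₁ - (λ-λ₂)·((λ₁-λ₄)/(λ₁-λ₂))·(u₄/u₂)·∂₂ + (λ-λ₄)·∂₄ and X₁(λ) = (λ-λ₁)·((λ₂-λ₃)/(λ₁-λ₂))·(v₃/v₁)·∂₁ - (λ-λ₂)·((λ₁-λ₃)/(λ₁-λ₂))·(u₃/u₂)·∂₂ + (λ-λ₃)·∂₃. Then the Lie bracket [X₀(λ), X₁(λ)] vanishes identically for all λ ∈ ℝ if and only if (u,v) satisfies the two-component system (λ₃-λ₄)(λ₁-λ₂)v₁u₂u₃₄ + (λ₂-λ₃)(λ₁-λ₄)(v₁u₄u₂₃ - v₃u₄u₁₂ + v₃u₂u₁₄) - (λ₂-λ₄)(λ₁-λ₃)(v₁u₃u₂₄ - v₄u₃u₁₂ + v₄u₂u₁₃) = 0 and the analogous equation with second derivatives of v in place of those of u. 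-/

import Mathlib

/-- Partial derivative of `f : ℝ⁴ → ℝ` in the `i`-th coordinate direction. -/
noncomputable def pd (i : Fin 4) (f : (Fin 4 → ℝ) → ℝ) (x : Fin 4 → ℝ) : ℝ :=
  fderiv ℝ f x (Pi.single i 1)

/-- Lie bracket of vector fields on ℝ⁴, given by their coefficient quadruples:
`[X,Y]ⁱ = Σⱼ (Xʲ ∂ⱼYⁱ - Yʲ ∂ⱼXⁱ)`. -/
noncomputable def lie (X Y : (Fin 4 → ℝ) → Fin 4 → ℝ) (x : Fin 4 → ℝ) (i : Fin 4) : ℝ :=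
  ∑ j : Fin 4, (X x j * pd j (fun y => Y y i) x - Y x j * pd j (fun y => X y i) x)

lemma pd_contDiff {f : (Fin 4 → ℝ) → ℝ} (hf : ContDiff ℝ (⊤ : ℕ∞) f) (i : Fin 4) :
    ContDiff ℝ (⊤ : ℕ∞) (pd i f) := by
  have : pd i f = (fun L : (Fin 4 → ℝ) →L[ℝ] ℝ => L (Pi.single i 1)) ∘ fderiv ℝ f := rfl
  rw [this]
  exact (ContinuousLinearMap.apply ℝ ℝ (Pi.single i 1)).contDiff.comp (hf.fderiv_right (m := ((⊤ : ℕ∞) : WithTop ℕ∞)) (by exact_mod_cast (le_top : (⊤ + 1 : ℕ∞) ≤ ⊤)))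

lemma pd_diffAt {f : (Fin 4 → ℝ) → ℝ} (hf : ContDiff ℝ (⊤ : ℕ∞) f) (i : Fin 4) (x : Fin 4 → ℝ) :
    DifferentiableAt ℝ (pd i f) x :=
  ((pd_contDiff hf i).differentiable (by simp)).differentiableAt

lemma pd_const (c : ℝ) (j : Fin 4) (x : Fin 4 → ℝ) : pd j (fun _ => c) x = 0 := by
  simp [pd, fderiv_const]

lemma pd_swap {f : (Fin 4 → ℝ) → ℝ} (hf : ContDiff ℝ (⊤ : ℕ∞) f) (i j : Fin 4) (x : Fin 4 → ℝ) :
    pd i (pd j f) x = pd j (pd i f) x := by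
  have hdf : DifferentiableAt ℝ (fderiv ℝ f) x :=
    ((hf.fderiv_right (m := 1) (WithTop.coe_le_coe.mpr le_top)).differentiable one_ne_zero).differentiableAt
  have key : ∀ k m : Fin 4, pd k (pd m f) x
      = fderiv ℝ (fderiv ℝ f) x (Pi.single k 1) (Pi.single m 1) := by
    intro k m
    have : pd m f = fun y => (fderiv ℝ f y) (Pi.single m 1) := rfl
    rw [pd, this, fderiv_clm_apply hdf (differentiableAt_const _)]
    simp
  rw [key, key]
  exact (hf.contDiffAt.isSymmSndFDerivAt (by rw [minSmoothness_of_isRCLikeNormedField]; exact WithTop.coe_le_coe.mpr le_top)) _ _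

lemma pd_inv {h : (Fin 4 → ℝ) → ℝ} {x : Fin 4 → ℝ} (hh : DifferentiableAt ℝ h x)
    (h0 : h x ≠ 0) (j : Fin 4) :
    pd j (fun y => (h y)⁻¹) x = -(pd j h x) / (h x)^2 := by
  have hc : (fun y => (h y)⁻¹) = Inv.inv ∘ h := rfl
  rw [pd, hc, fderiv_comp (x := x) (differentiableAt_inv h0) hh, fderiv_inv' h0]
  simp only [ContinuousLinearMap.comp_apply, ContinuousLinearMap.neg_apply,
    ContinuousLinearMap.mulLeftRight_apply, pd]
  rw [eq_div_iff (pow_ne_zero 2 h0)]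
  field_simp

lemma pd_aux {f : (Fin 4 → ℝ) → ℝ} (hf : ContDiff ℝ (⊤ : ℕ∞) f) (c : ℝ) (k m : Fin 4)
    (hm : ∀ x, pd m f x ≠ 0) (j : Fin 4) (x : Fin 4 → ℝ) :
    pd j (fun y => c * (pd k f y / pd m f y)) x
      = c * ((pd j (pd k f) x * pd m f x - pd k f x * pd j (pd m f) x) / (pd m f x)^2) := by
  have hk := pd_diffAt hf k x
  have hm' := pd_diffAt hf m x
  have hmx := hm x
  have hinv : DifferentiableAt ℝ (fun y => (pd m f y)⁻¹) x := hm'.inv hmx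
  have e1 : (fun y => c * (pd k f y / pd m f y))
      = fun y => c * (pd k f y * (pd m f y)⁻¹) := by
    funext y; rw [div_eq_mul_inv]
  have h2 : pd j (fun y => c * (pd k f y * (pd m f y)⁻¹)) x
      = c * pd j (fun y => pd k f y * (pd m f y)⁻¹) x := by
    rw [pd, pd, fderiv_const_mul (a := fun y => pd k f y * (pd m f y)⁻¹) (hk.mul hinv)]
    simp
  have h3 : pd j (fun y => pd k f y * (pd m f y)⁻¹) x
      = pd j (pd k f) x * (pd m f x)⁻¹ + pd k f x * pd j (fun y => (pd m f y)⁻¹) x := by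
    rw [pd, fderiv_fun_mul hk hinv]
    simp only [ContinuousLinearMap.add_apply, ContinuousLinearMap.smul_apply, smul_eq_mul, pd]
    ring
  rw [e1, h2, h3, pd_inv hm' hmx]
  field_simp
  ring

lemma pd_aux_neg {f : (Fin 4 → ℝ) → ℝ} (hf : ContDiff ℝ (⊤ : ℕ∞) f) (c : ℝ) (k m : Fin 4)
    (hm : ∀ x, pd m f x ≠ 0) (j : Fin 4) (x : Fin 4 → ℝ) :
    pd j (fun y => -(c * (pd k f y / pd m f y))) x
      = -(c * ((pd j (pd k f) x * pd m f x - pd k f x * pd j (pd m f) x) / (pd m f x)^2)) := by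
  rw [← pd_aux hf c k m hm j x, pd, pd, fderiv_fun_neg]
  simp

set_option maxHeartbeats 2000000 in
theorem stmt2 (l1 l2 l3 l4 : ℝ)
    (hd : l1 ≠ l2 ∧ l1 ≠ l3 ∧ l1 ≠ l4 ∧ l2 ≠ l3 ∧ l2 ≠ l4 ∧ l3 ≠ l4)
    (u v : (Fin 4 → ℝ) → ℝ) (hu : ContDiff ℝ (⊤ : ℕ∞) u) (hv : ContDiff ℝ (⊤ : ℕ∞) v)
    (hu2 : ∀ x, pd 1 u x ≠ 0) (hu3 : ∀ x, pd 2 u x ≠ 0) (hu4 : ∀ x, pd 3 u x ≠ 0)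
    (hv1 : ∀ x, pd 0 v x ≠ 0) (hv3 : ∀ x, pd 2 v x ≠ 0) (hv4 : ∀ x, pd 3 v x ≠ 0)
    (X0 X1 : ℝ → (Fin 4 → ℝ) → Fin 4 → ℝ)
    (hX0 : ∀ lam x, X0 lam x =
      ![(lam - l1) * ((l2 - l4) / (l1 - l2)) * (pd 3 v x / pd 0 v x),
        -((lam - l2) * ((l1 - l4) / (l1 - l2)) * (pd 3 u x / pd 1 u x)),
        0,
        lam - l4])
    (hX1 : ∀ lam x, X1 lam x =
      ![(lam - l1) * ((l2 - l3) / (l1 - l2)) * (pd 2 v x / pd 0 v x),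
        -((lam - l2) * ((l1 - l3) / (l1 - l2)) * (pd 2 u x / pd 1 u x)),
        lam - l3,
        0]) :
    (∀ (lam : ℝ) (x : Fin 4 → ℝ) (i : Fin 4), lie (X0 lam) (X1 lam) x i = 0)
    ↔ (∀ x,
      ((l3 - l4) * (l1 - l2) * (pd 0 v x * pd 1 u x * pd 2 (pd 3 u) x)
      + (l2 - l3) * (l1 - l4) * (pd 0 v x * pd 3 u x * pd 1 (pd 2 u) x
          - pd 2 v x * pd 3 u x * pd 0 (pd 1 u) x
          + pd 2 v x * pd 1 u x * pd 0 (pd 3 u) x)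
      - (l2 - l4) * (l1 - l3) * (pd 0 v x * pd 2 u x * pd 1 (pd 3 u) x
          - pd 3 v x * pd 2 u x * pd 0 (pd 1 u) x
          + pd 3 v x * pd 1 u x * pd 0 (pd 2 u) x) = 0)
      ∧
      ((l3 - l4) * (l1 - l2) * (pd 0 v x * pd 1 u x * pd 2 (pd 3 v) x)
      + (l2 - l3) * (l1 - l4) * (pd 0 v x * pd 3 u x * pd 1 (pd 2 v) x
          - pd 2 v x * pd 3 u x * pd 0 (pd 1 v) x
          + pd 2 v x * pd 1 u x * pd 0 (pd 3 v) x)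
      - (l2 - l4) * (l1 - l3) * (pd 0 v x * pd 2 u x * pd 1 (pd 3 v) x
          - pd 3 v x * pd 2 u x * pd 0 (pd 1 v) x
          + pd 3 v x * pd 1 u x * pd 0 (pd 2 v) x) = 0)) := by
  have h12 : l1 - l2 ≠ 0 := sub_ne_zero_of_ne hd.1
  have key0 : ∀ (lam : ℝ) (x : Fin 4 → ℝ),
      lie (X0 lam) (X1 lam) x 0 * ((l1 - l2)^2 * (pd 0 v x)^2 * pd 1 u x)
      = -((lam - l1) * (lam - l2)) *
      ((l3 - l4) * (l1 - l2) * (pd 0 v x * pd 1 u x * pd 2 (pd 3 v) x)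
      + (l2 - l3) * (l1 - l4) * (pd 0 v x * pd 3 u x * pd 1 (pd 2 v) x
          - pd 2 v x * pd 3 u x * pd 0 (pd 1 v) x
          + pd 2 v x * pd 1 u x * pd 0 (pd 3 v) x)
      - (l2 - l4) * (l1 - l3) * (pd 0 v x * pd 2 u x * pd 1 (pd 3 v) x
          - pd 3 v x * pd 2 u x * pd 0 (pd 1 v) x
          + pd 3 v x * pd 1 u x * pd 0 (pd 2 v) x)) := by
    intro lam x
    simp only [lie, Fin.sum_univ_four, hX0, hX1, Matrix.cons_val_zero, Matrix.cons_val_one,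
      Matrix.head_cons, Matrix.cons_val_two, Matrix.tail_cons, Matrix.cons_val_three,
      pd_aux hv ((lam - l1) * ((l2 - l3) / (l1 - l2))) 2 0 hv1,
      pd_aux hv ((lam - l1) * ((l2 - l4) / (l1 - l2))) 3 0 hv1,
      pd_aux_neg hu ((lam - l2) * ((l1 - l3) / (l1 - l2))) 2 1 hu2,
      pd_aux_neg hu ((lam - l2) * ((l1 - l4) / (l1 - l2))) 3 1 hu2,
      pd_const]
    rw [pd_swap hv 1 0 x, pd_swap hv 2 0 x, pd_swap hv 3 0 x, pd_swap hv 3 2 x]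
    have hV0' : pd 0 v x ≠ 0 := hv1 x
    have hU1' : pd 1 u x ≠ 0 := hu2 x
    set V0 := pd 0 v x with hV0
    set V2 := pd 2 v x with hV2
    set V3 := pd 3 v x with hV3
    set U1 := pd 1 u x with hU1
    set U2 := pd 2 u x with hU2
    set U3 := pd 3 u x with hU3
    set W01 := pd 0 (pd 1 v) x with hW01
    set W02 := pd 0 (pd 2 v) x with hW02
    set W03 := pd 0 (pd 3 v) x with hW03
    set W12 := pd 1 (pd 2 v) x with hW12
    set W13 := pd 1 (pd 3 v) x with hW13
    set W23 := pd 2 (pd 3 v) x with hW23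
    field_simp [h12, hV0', hU1']
    ring
  have key1 : ∀ (lam : ℝ) (x : Fin 4 → ℝ),
      lie (X0 lam) (X1 lam) x 1 * ((l1 - l2)^2 * (pd 1 u x)^2 * pd 0 v x)
      = (lam - l1) * (lam - l2) *
      ((l3 - l4) * (l1 - l2) * (pd 0 v x * pd 1 u x * pd 2 (pd 3 u) x)
      + (l2 - l3) * (l1 - l4) * (pd 0 v x * pd 3 u x * pd 1 (pd 2 u) x
          - pd 2 v x * pd 3 u x * pd 0 (pd 1 u) x
          + pd 2 v x * pd 1 u x * pd 0 (pd 3 u) x)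
      - (l2 - l4) * (l1 - l3) * (pd 0 v x * pd 2 u x * pd 1 (pd 3 u) x
          - pd 3 v x * pd 2 u x * pd 0 (pd 1 u) x
          + pd 3 v x * pd 1 u x * pd 0 (pd 2 u) x)) := by
    intro lam x
    simp only [lie, Fin.sum_univ_four, hX0, hX1, Matrix.cons_val_zero, Matrix.cons_val_one,
      Matrix.head_cons, Matrix.cons_val_two, Matrix.tail_cons, Matrix.cons_val_three,
      pd_aux hv ((lam - l1) * ((l2 - l3) / (l1 - l2))) 2 0 hv1,
      pd_aux hv ((lam - l1) * ((l2 - l4) / (l1 - l2))) 3 0 hv1,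
      pd_aux_neg hu ((lam - l2) * ((l1 - l3) / (l1 - l2))) 2 1 hu2,
      pd_aux_neg hu ((lam - l2) * ((l1 - l4) / (l1 - l2))) 3 1 hu2,
      pd_const]
    rw [pd_swap hu 3 2 x, pd_swap hu 2 1 x, pd_swap hu 3 1 x]
    have hV0' : pd 0 v x ≠ 0 := hv1 x
    have hU1' : pd 1 u x ≠ 0 := hu2 x
    set V0 := pd 0 v x with hV0
    set V2 := pd 2 v x with hV2
    set V3 := pd 3 v x with hV3
    set U1 := pd 1 u x with hU1
    set U2 := pd 2 u x with hU2
    set U3 := pd 3 u x with hU3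
    set M01 := pd 0 (pd 1 u) x with hM01
    set M02 := pd 0 (pd 2 u) x with hM02
    set M03 := pd 0 (pd 3 u) x with hM03
    set M11 := pd 1 (pd 1 u) x with hM11
    set M12 := pd 1 (pd 2 u) x with hM12
    set M13 := pd 1 (pd 3 u) x with hM13
    set M23 := pd 2 (pd 3 u) x with hM23
    field_simp [h12, hV0', hU1']
    ring
  have key2 : ∀ (lam : ℝ) (x : Fin 4 → ℝ), lie (X0 lam) (X1 lam) x 2 = 0 := by
    intro lam x
    simp only [lie, Fin.sum_univ_four, hX0, hX1, Matrix.cons_val_zero, Matrix.cons_val_one,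
      Matrix.head_cons, Matrix.cons_val_two, Matrix.tail_cons, Matrix.cons_val_three,
      pd_const]
    ring
  have key3 : ∀ (lam : ℝ) (x : Fin 4 → ℝ), lie (X0 lam) (X1 lam) x 3 = 0 := by
    intro lam x
    simp only [lie, Fin.sum_univ_four, hX0, hX1, Matrix.cons_val_zero, Matrix.cons_val_one,
      Matrix.head_cons, Matrix.cons_val_two, Matrix.tail_cons, Matrix.cons_val_three,
      pd_const]
    ring
  constructor
  · intro hall x
    have h31 : l3 - l1 ≠ 0 := sub_ne_zero_of_ne (Ne.symm hd.2.1)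
    have h32 : l3 - l2 ≠ 0 := sub_ne_zero_of_ne (Ne.symm hd.2.2.2.1)
    constructor
    · have k := key1 l3 x
      rw [hall l3 x 1, zero_mul] at k
      exact ((mul_eq_zero.mp k.symm).resolve_left (mul_ne_zero h31 h32))
    · have k := key0 l3 x
      rw [hall l3 x 0, zero_mul] at k
      exact ((mul_eq_zero.mp k.symm).resolve_left
        (neg_ne_zero.mpr (mul_ne_zero h31 h32)))
  · intro h lam x i
    have hD0 : (l1 - l2)^2 * (pd 0 v x)^2 * pd 1 u x ≠ 0 :=
      mul_ne_zero (mul_ne_zero (pow_ne_zero _ h12) (pow_ne_zero _ (hv1 x))) (hu2 x)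
    have hD1 : (l1 - l2)^2 * (pd 1 u x)^2 * pd 0 v x ≠ 0 :=
      mul_ne_zero (mul_ne_zero (pow_ne_zero _ h12) (pow_ne_zero _ (hu2 x))) (hv1 x)
    fin_cases i
    · have k := key0 lam x
      rw [(h x).2, mul_zero] at k
      exact (mul_eq_zero.mp k).resolve_right hD0
    · have k := key1 lam x
      rw [(h x).1, mul_zero] at k
      exact (mul_eq_zero.mp k).resolve_right hD1
    · exact key2 lam x
    · exact key3 lam x
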